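/- arXiv:2512.19157 — 2 statements merged into one kernel-verified Lean document; each statement's English description precedes it below -/
import Mathlib

section
/- Let p ∈ [1,∞) with conjugate exponent q, and let R ⊆ P_q(ℝ) satisfy Assumption (OT)(i). Then for all X₁, X₂ ∈ L^p(Ω,ℝ) and every θ ∈ [0,1], one has ρ_R((1−θ)X₁ + θX₂) ≤ (1−θ)ρ_R(X₁) + θρ_R(X₂) (convexity of the transport-based risk measure; in particular, Assumption (OT)(ii) is not needed for convexity). -/
open MeasureTheory ENNReal

/-- `M_s(m)`: the moment of order `s ∈ [1,∞]` of a measure `m` on `ℝ`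
(for `s = ∞`, the essential supremum of `|x|`, i.e. the sup of `|x|` over the support). -/
noncomputable def Mmom (s : ℝ≥0∞) (m : Measure ℝ) : ℝ≥0∞ :=
  eLpNorm (fun x : ℝ => x) s m

/-- Assumption (OT)(i): `R` is a bounded set of probability measures with finite `q`-moment. -/
def OTone (q : ℝ≥0∞) (R : Set (Measure ℝ)) : Prop :=
  (∀ r ∈ R, IsProbabilityMeasure r) ∧ (⨆ r ∈ R, Mmom q r) < ⊤

/-- Assumption (OT)(ii): every `r ∈ R` is supported in `[0,∞)` and has expectation `1`. -/
def OTtwo (R : Set (Measure ℝ)) : Prop :=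
  ∀ r ∈ R, r (Set.Iio (0:ℝ)) = 0 ∧ ∫⁻ y, ENNReal.ofReal y ∂r = 1

/-- The value `χ_R(m)` of the generalized optimal transport problem: the supremum of
`∫ x·y dπ` over transport plans `π` with first marginal `m` and second marginal in `R`. -/
noncomputable def chi (R : Set (Measure ℝ)) (m : Measure ℝ) : ℝ :=
  sSup {v : ℝ | ∃ π : Measure (ℝ × ℝ), IsProbabilityMeasure π ∧
    π.map Prod.fst = m ∧ π.map Prod.snd ∈ R ∧ v = ∫ z : ℝ × ℝ, z.1 * z.2 ∂π}

open ProbabilityTheory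

/-!
Disintegrate a plan `π` for the law of `Z = (1-θ)X₁ + θX₂` along its first marginal and compose
the kernel with `Z`: this lifts `π` to a coupling `μ` of `ℙ` on `Ω × ℝ` whose second marginal is
that of `π`. Pushing `μ` forward by `(Xᵢ, id)` gives plans for the laws of `X₁` and `X₂` with the same
second marginal, and the value of `π` is the `(1-θ, θ)`-combination of their values. Hölder's
inequality and the bound on `R` make the suprema defining `χ_R(ℙ_{Xᵢ})` finite.
-/

theorem integral_mul_le_toReal_eLpNorm_mul_eLpNorm {α : Type*} [MeasurableSpace α]
    {μ : Measure α} {p q : ℝ≥0∞} [p.HolderConjugate q] {f g : α → ℝ}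
    (hf : AEStronglyMeasurable f μ) (hg : AEStronglyMeasurable g μ)
    (hfg : eLpNorm f p μ * eLpNorm g q μ ≠ ∞) :
    ∫ x, f x * g x ∂μ ≤ (eLpNorm f p μ * eLpNorm g q μ).toReal := by
  have holder : eLpNorm (f * g) 1 μ ≤ eLpNorm f p μ * eLpNorm g q μ :=
    -- elaborated without expected type: unifying `f • g` with `f * g` there does not terminate
    (eLpNorm_smul_le_mul_eLpNorm (p := p) (q := q) (r := 1) hg hf :)
  calc ∫ x, f x * g x ∂μ ≤ ∫ x, ‖f x * g x‖ ∂μ :=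
        (le_abs_self _).trans abs_integral_le_integral_abs
    _ = (eLpNorm (f * g) 1 μ).toReal := by
        rw [toReal_eLpNorm (hf.mul hg), lpNorm_one_eq_integral_norm (hf.mul hg)]
        simp only [Pi.mul_apply]
    _ ≤ (eLpNorm f p μ * eLpNorm g q μ).toReal := toReal_mono hfg holder

theorem map_compProd_comap_eq_compProd {Ω α β : Type*} [MeasurableSpace Ω] [MeasurableSpace α]
    [MeasurableSpace β] (P : Measure Ω) [SFinite P] {Z : Ω → α} (hZ : Measurable Z)
    (κ : Kernel α β) [IsSFiniteKernel κ] :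
    (P ⊗ₘ κ.comap Z hZ).map (fun w => (Z w.1, w.2)) = P.map Z ⊗ₘ κ := by
  have hZ₂ : Measurable (fun w : Ω × β => (Z w.1, w.2)) := by fun_prop
  ext s hs
  rw [Measure.map_apply hZ₂ hs, Measure.compProd_apply (hZ₂ hs), Measure.compProd_apply hs,
    lintegral_map (Kernel.measurable_kernel_prodMk_left hs) hZ]
  rfl

def transportValues (R : Set (Measure ℝ)) (m : Measure ℝ) : Set ℝ :=
  {v : ℝ | ∃ π : Measure (ℝ × ℝ), IsProbabilityMeasure π ∧
    π.map Prod.fst = m ∧ π.map Prod.snd ∈ R ∧ v = ∫ z : ℝ × ℝ, z.1 * z.2 ∂π}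

theorem chi_eq_sSup_transportValues (R : Set (Measure ℝ)) (m : Measure ℝ) :
    chi R m = sSup (transportValues R m) :=
  rfl

theorem chi_empty (m : Measure ℝ) : chi ∅ m = 0 := by
  simp [chi]

theorem Mmom_map {Ω : Type*} [MeasurableSpace Ω] {P : Measure Ω} {X : Ω → ℝ}
    (hX : AEMeasurable X P) (s : ℝ≥0∞) : Mmom s (P.map X) = eLpNorm X s P :=
  eLpNorm_map_measure aestronglyMeasurable_id hX

section Holder

variable {p q : ℝ≥0∞} [p.HolderConjugate q]

theorem integral_fst_mul_snd_le (π : Measure (ℝ × ℝ))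
    (hπ : Mmom p (π.map Prod.fst) * Mmom q (π.map Prod.snd) ≠ ∞) :
    ∫ z : ℝ × ℝ, z.1 * z.2 ∂π ≤ (Mmom p (π.map Prod.fst) * Mmom q (π.map Prod.snd)).toReal := by
  rw [Mmom_map measurable_fst.aemeasurable, Mmom_map measurable_snd.aemeasurable] at hπ ⊢
  exact integral_mul_le_toReal_eLpNorm_mul_eLpNorm measurable_fst.aestronglyMeasurable
    measurable_snd.aestronglyMeasurable hπ

theorem bddAbove_transportValues {R : Set (Measure ℝ)} {m : Measure ℝ} (hm : Mmom p m ≠ ∞)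
    (hR : ⨆ r ∈ R, Mmom q r ≠ ∞) : BddAbove (transportValues R m) := by
  refine ⟨(Mmom p m * ⨆ r ∈ R, Mmom q r).toReal, ?_⟩
  rintro _ ⟨π, -, rfl, hπR, rfl⟩
  have hr : Mmom q (π.map Prod.snd) ≤ ⨆ r ∈ R, Mmom q r := le_biSup (Mmom q) hπR
  exact (integral_fst_mul_snd_le π (mul_ne_top hm (ne_top_of_le_ne_top hR hr))).trans
    (toReal_mono (mul_ne_top hm hR) (mul_le_mul_right hr _))

end Holder

theorem transportValues_nonempty {R : Set (Measure ℝ)} (m : Measure ℝ) [IsProbabilityMeasure m]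
    {r : Measure ℝ} [IsProbabilityMeasure r] (hr : r ∈ R) : (transportValues R m).Nonempty :=
  ⟨_, m.prod r, inferInstance, Measure.fst_prod, by rwa [← Measure.snd, Measure.snd_prod], rfl⟩

section Lift

variable {Ω α β : Type*} [MeasurableSpace Ω] [MeasurableSpace α] [MeasurableSpace β]
  {P : Measure Ω} {μ : Measure (Ω × β)}

theorem AEMeasurable.prodMk_fst_of_map_fst_eq (hμ : μ.map Prod.fst = P) {X : Ω → α}
    (hX : AEMeasurable X P) : AEMeasurable (fun w : Ω × β => (X w.1, w.2)) μ :=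
  ((hμ ▸ hX).comp_aemeasurable measurable_fst.aemeasurable).prodMk measurable_snd.aemeasurable

theorem exists_lift_of_map_fst_eq [StandardBorelSpace β] [Nonempty β]
    [IsProbabilityMeasure P] {Z : Ω → α} (hZ : AEMeasurable Z P)
    (π : Measure (α × β)) [IsFiniteMeasure π] (hπ : π.map Prod.fst = P.map Z) :
    ∃ μ : Measure (Ω × β), IsProbabilityMeasure μ ∧ μ.map Prod.fst = P ∧
      μ.map Prod.snd = π.map Prod.snd ∧ μ.map (fun w => (Z w.1, w.2)) = π := by
  set Z' := hZ.mk Z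
  have hZ' : Measurable Z' := hZ.measurable_mk
  set μ := P ⊗ₘ π.condKernel.comap Z' hZ'
  have hμ₁ : μ.map Prod.fst = P := Measure.fst_compProd _ _
  have hlift' : μ.map (fun w => (Z' w.1, w.2)) = π := by
    rw [map_compProd_comap_eq_compProd, ← Measure.map_congr hZ.ae_eq_mk, ← hπ]
    exact π.disintegrate π.condKernel
  have hZZ' : (fun w : Ω × β => (Z w.1, w.2)) =ᵐ[μ] fun w => (Z' w.1, w.2) := by
    have hfst : Z ∘ Prod.fst =ᵐ[μ] Z' ∘ Prod.fst :=
      ae_eq_comp measurable_fst.aemeasurable (by rw [hμ₁]; exact hZ.ae_eq_mk)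
    filter_upwards [hfst] with w hw
    exact congrArg (·, w.2) hw
  refine ⟨μ, inferInstance, hμ₁, ?_, (Measure.map_congr hZZ').trans hlift'⟩
  conv_rhs => rw [← hlift', Measure.map_map measurable_snd (by fun_prop)]
  rfl

end Lift

section Couplings

variable {Ω : Type*} [MeasurableSpace Ω] {P : Measure Ω} {μ : Measure (Ω × ℝ)}

theorem integral_map_prodMk_fst (hμ : μ.map Prod.fst = P) {X : Ω → ℝ} (hX : AEMeasurable X P) :
    ∫ z : ℝ × ℝ, z.1 * z.2 ∂μ.map (fun w => (X w.1, w.2)) = ∫ w, X w.1 * w.2 ∂μ :=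
  integral_map (hX.prodMk_fst_of_map_fst_eq hμ) (by fun_prop)

theorem integral_mem_transportValues [IsProbabilityMeasure μ] {R : Set (Measure ℝ)}
    (hμ₁ : μ.map Prod.fst = P) (hμ₂ : μ.map Prod.snd ∈ R) {X : Ω → ℝ} (hX : AEMeasurable X P) :
    ∫ w, X w.1 * w.2 ∂μ ∈ transportValues R (P.map X) := by
  have hXY := hX.prodMk_fst_of_map_fst_eq hμ₁
  refine ⟨μ.map (fun w => (X w.1, w.2)), Measure.isProbabilityMeasure_map hXY, ?_, ?_,
    (integral_map_prodMk_fst hμ₁ hX).symm⟩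
  · rw [AEMeasurable.map_map_of_aemeasurable measurable_fst.aemeasurable hXY, ← hμ₁,
      AEMeasurable.map_map_of_aemeasurable (hμ₁ ▸ hX) measurable_fst.aemeasurable]
    rfl
  · rwa [AEMeasurable.map_map_of_aemeasurable measurable_snd.aemeasurable hXY]

variable {p q : ℝ≥0∞} [p.HolderConjugate q]

theorem integral_le_chi_map [IsProbabilityMeasure μ] {R : Set (Measure ℝ)}
    (hR : ⨆ r ∈ R, Mmom q r ≠ ∞) (hμ₁ : μ.map Prod.fst = P) (hμ₂ : μ.map Prod.snd ∈ R)
    {X : Ω → ℝ} (hX : MemLp X p P) : ∫ w, X w.1 * w.2 ∂μ ≤ chi R (P.map X) := by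
  have hm : Mmom p (P.map X) ≠ ∞ := by
    rw [Mmom_map hX.aestronglyMeasurable.aemeasurable]
    exact hX.eLpNorm_ne_top
  exact le_csSup (bddAbove_transportValues hm hR)
    (integral_mem_transportValues hμ₁ hμ₂ hX.aestronglyMeasurable.aemeasurable)

theorem integrable_mul_snd (hμ₁ : μ.map Prod.fst = P) (hμ₂ : Mmom q (μ.map Prod.snd) ≠ ∞)
    {X : Ω → ℝ} (hX : MemLp X p P) : Integrable (fun w => X w.1 * w.2) μ := by
  have hX₁ : MemLp (fun w : Ω × ℝ => X w.1) p μ :=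
    hX.comp_measurePreserving ⟨measurable_fst, hμ₁⟩
  have hY : MemLp (fun w : Ω × ℝ => w.2) q μ :=
    (show MemLp (fun y : ℝ => y) q (μ.map Prod.snd) from
      ⟨aestronglyMeasurable_id, hμ₂.lt_top⟩).comp_measurePreserving ⟨measurable_snd, rfl⟩
  exact hX₁.integrable_mul hY

end Couplings

theorem convexity_general
    (p q : ℝ≥0∞) (hpq : p⁻¹ + q⁻¹ = 1)
    (R : Set (Measure ℝ)) (hR1 : OTone q R)
    (Ω : Type) [MeasurableSpace Ω] (P : Measure Ω) [IsProbabilityMeasure P]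
    (X₁ X₂ : Ω → ℝ) (hX₁ : MemLp X₁ p P) (hX₂ : MemLp X₂ p P)
    (θ : ℝ) (hθ0 : 0 ≤ θ) (hθ1 : θ ≤ 1) :
    chi R (P.map (fun ω => (1 - θ) * X₁ ω + θ * X₂ ω)) ≤
      (1 - θ) * chi R (P.map X₁) + θ * chi R (P.map X₂) := by
  have : p.HolderConjugate q := ENNReal.holderConjugate_iff.2 hpq
  obtain ⟨hRprob, hRbdd⟩ := hR1
  rcases R.eq_empty_or_nonempty with rfl | ⟨r₀, hr₀⟩
  · simp [chi_empty]
  have := hRprob r₀ hr₀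
  set Z := fun ω => (1 - θ) * X₁ ω + θ * X₂ ω
  have hZ : AEMeasurable Z P := ((hX₁.aestronglyMeasurable.aemeasurable.const_mul _).add
    (hX₂.aestronglyMeasurable.aemeasurable.const_mul _))
  have : IsProbabilityMeasure (P.map Z) := Measure.isProbabilityMeasure_map hZ
  rw [chi_eq_sSup_transportValues]
  refine csSup_le (transportValues_nonempty _ hr₀) ?_
  rintro _ ⟨π, hπ, hπ₁, hπR, rfl⟩
  obtain ⟨μ, hμ, hμ₁, hμ₂, rfl⟩ := exists_lift_of_map_fst_eq hZ π hπ₁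
  rw [← hμ₂] at hπR
  have hμq : Mmom q (μ.map Prod.snd) ≠ ∞ := ne_top_of_le_ne_top hRbdd.ne (le_biSup _ hπR)
  calc ∫ z : ℝ × ℝ, z.1 * z.2 ∂μ.map (fun w => (Z w.1, w.2))
      = (1 - θ) * ∫ w, X₁ w.1 * w.2 ∂μ + θ * ∫ w, X₂ w.1 * w.2 ∂μ := by
        rw [integral_map_prodMk_fst hμ₁ hZ, ← integral_const_mul, ← integral_const_mul,
          ← integral_add ((integrable_mul_snd hμ₁ hμq hX₁).const_mul _)
            ((integrable_mul_snd hμ₁ hμq hX₂).const_mul _)]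
        congr 1 with w
        ring
    _ ≤ (1 - θ) * chi R (P.map X₁) + θ * chi R (P.map X₂) := by
        have hθ1' : 0 ≤ 1 - θ := by linarith
        gcongr
        · exact integral_le_chi_map hRbdd.ne hμ₁ hπR hX₁
        · exact integral_le_chi_map hRbdd.ne hμ₁ hπR hX₂

/-- Convexity of the transport-based risk measure: for `R` satisfying (OT)(i) only,
`ρ_R((1−θ)X₁ + θX₂) ≤ (1−θ)ρ_R(X₁) + θρ_R(X₂)` for all `θ ∈ [0,1]`. -/
theorem convexity
    (p q : ℝ≥0∞) (hp1 : 1 ≤ p) (hptop : p ≠ ⊤) (hpq : p⁻¹ + q⁻¹ = 1)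
    (R : Set (Measure ℝ)) (hR1 : OTone q R)
    (Ω : Type) [MeasurableSpace Ω] (P : Measure Ω) [IsProbabilityMeasure P]
    (X₁ X₂ : Ω → ℝ) (hX₁ : MemLp X₁ p P) (hX₂ : MemLp X₂ p P)
    (θ : ℝ) (hθ0 : 0 ≤ θ) (hθ1 : θ ≤ 1) :
    chi R (P.map (fun ω => (1 - θ) * X₁ ω + θ * X₂ ω)) ≤
      (1 - θ) * chi R (P.map X₁) + θ * chi R (P.map X₂) :=
  convexity_general p q hpq R hR1 Ω P X₁ X₂ hX₁ hX₂ θ hθ0 hθ1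
end

section
/- Let p ∈ [1,∞) with conjugate exponent q, and let R ⊆ P_q(ℝ) satisfy Assumption (OT)(i) with L_R := sup_{r ∈ R} M_q(r). Then for all m₁, m₂ ∈ P_p(ℝ) and every Borel probability measure γ on ℝ² whose first marginal is m₁ and second marginal is m₂, one has |χ_R(m₂) − χ_R(m₁)| ≤ L_R · (∫_{ℝ²} |x₂ − x₁|^p dγ(x₁,x₂))^{1/p}. In particular, χ_R : P_p(ℝ) → ℝ is L_R-Lipschitz continuous with respect to the p-Wasserstein distance W_p. -/
open MeasureTheory ENNReal

/-- The `p`-Wasserstein distance between two probability measures on `ℝ`, as the infimum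
of `(∫ |x₁−x₂|^p dγ)^{1/p}` over couplings `γ` of `m₁` and `m₂`. -/
noncomputable def Wassp (p : ℝ≥0∞) (m₁ m₂ : Measure ℝ) : ℝ≥0∞ :=
  ⨅ γ : {γ : Measure (ℝ × ℝ) // IsProbabilityMeasure γ ∧
      γ.map Prod.fst = m₁ ∧ γ.map Prod.snd = m₂},
    eLpNorm (fun z : ℝ × ℝ => z.1 - z.2) p γ.1

/-!
Let `π` be a plan for `m₁` with second marginal `r ∈ R` and `γ` a coupling of `m₁` and `m₂`.
Disintegrating `π` along `m₁` glues it to `γ` into a law of `(x₁, x₂, y)`; the law of `(x₂, y)`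
is then a plan for `m₂` with the same `r`, and its gain differs from that of `π` by
`∫ (x₁ - x₂) y`, which Hölder bounds by `‖x₁ - x₂‖_{L^p(γ)} · M_q(r) ≤ L_R ‖x₁ - x₂‖_{L^p(γ)}`.
Taking the supremum over `π` gives `χ_R(m₁) ≤ χ_R(m₂) + L_R ‖x₁ - x₂‖_{L^p(γ)}`, swapping the
coordinates of `γ` the reverse inequality, and the infimum over `γ` the Wasserstein bound.
-/

open ProbabilityTheory

lemma abs_integral_mul_le_eLpNorm_mul_eLpNorm {α : Type*} [MeasurableSpace α] {μ : Measure α}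
    {p q : ℝ≥0∞} [p.HolderConjugate q] {f g : α → ℝ} (hf : MemLp f p μ) (hg : MemLp g q μ) :
    |∫ a, f a * g a ∂μ| ≤ (eLpNorm f p μ).toReal * (eLpNorm g q μ).toReal := by
  have hfg : eLpNorm (f • g) 1 μ ≤ eLpNorm f p μ * eLpNorm g q μ :=
    eLpNorm_smul_le_mul_eLpNorm hg.1 hf.1
  calc |∫ a, f a * g a ∂μ|
    _ ≤ ∫ a, ‖f a * g a‖ ∂μ := by
      simpa only [Real.norm_eq_abs] using norm_integral_le_integral_norm (fun a => f a * g a)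
    _ = (eLpNorm (f • g) 1 μ).toReal := by
      rw [eLpNorm_one_eq_lintegral_enorm]
      exact integral_norm_eq_lintegral_enorm (hf.integrable_mul hg).1
    _ ≤ (eLpNorm f p μ).toReal * (eLpNorm g q μ).toReal := by
      rw [← ENNReal.toReal_mul]
      exact ENNReal.toReal_mono (ENNReal.mul_ne_top hf.2.ne hg.2.ne) hfg

lemma eLpNorm_eq_Mmom_map {δ : Type*} [MeasurableSpace δ] (μ : Measure δ) {φ : δ → ℝ}
    (hφ : Measurable φ) (s : ℝ≥0∞) : eLpNorm φ s μ = Mmom s (μ.map φ) :=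
  (eLpNorm_map_measure measurable_id.aestronglyMeasurable hφ.aemeasurable).symm

lemma memLp_of_Mmom_map_lt_top {δ : Type*} [MeasurableSpace δ] {μ : Measure δ} {φ : δ → ℝ}
    (hφ : Measurable φ) {s : ℝ≥0∞} (h : Mmom s (μ.map φ) < ⊤) : MemLp φ s μ :=
  ⟨hφ.aestronglyMeasurable, by rwa [eLpNorm_eq_Mmom_map μ hφ]⟩

lemma MeasureTheory.Measure.map_prodMap_compProd_comap {α β δ : Type*} [MeasurableSpace α]
    [MeasurableSpace β] [MeasurableSpace δ] (μ : Measure α) [SFinite μ] (κ : Kernel β δ)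
    [IsSFiniteKernel κ] {f : α → β} (hf : Measurable f) :
    (μ ⊗ₘ κ.comap f hf).map (Prod.map f id) = μ.map f ⊗ₘ κ := by
  ext s hs
  have hfs : MeasurableSet (Prod.map f id ⁻¹' s) := (hf.prodMap measurable_id) hs
  rw [Measure.map_apply (hf.prodMap measurable_id) hs, Measure.compProd_apply hfs,
    Measure.compProd_apply hs, lintegral_map (Kernel.measurable_kernel_prodMk_left hs) hf]
  rfl

lemma exists_glue {α β δ : Type*} [MeasurableSpace α] [MeasurableSpace β] [MeasurableSpace δ]
    [StandardBorelSpace β] [Nonempty β] (π : Measure (α × β)) [IsFiniteMeasure π]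
    (γ : Measure (α × δ)) [IsProbabilityMeasure γ] (h : γ.map Prod.fst = π.map Prod.fst) :
    ∃ μ : Measure ((α × δ) × β), IsProbabilityMeasure μ ∧ μ.map Prod.fst = γ ∧
      μ.map (Prod.map Prod.fst id) = π := by
  refine ⟨γ ⊗ₘ π.condKernel.comap Prod.fst measurable_fst, inferInstance,
    Measure.fst_compProd _ _, ?_⟩
  rw [Measure.map_prodMap_compProd_comap, h]
  exact π.disintegrate π.condKernel

lemma exists_plan_integral_le {p q : ℝ≥0∞} [p.HolderConjugate q] (π : Measure (ℝ × ℝ))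
    [IsFiniteMeasure π] (hx : MemLp Prod.fst p π) (hy : MemLp Prod.snd q π)
    (γ : Measure (ℝ × ℝ)) [IsProbabilityMeasure γ] (hγ : γ.map Prod.fst = π.map Prod.fst)
    (hcost : MemLp (fun z : ℝ × ℝ => z.1 - z.2) p γ) :
    ∃ π' : Measure (ℝ × ℝ), IsProbabilityMeasure π' ∧ π'.map Prod.fst = γ.map Prod.snd ∧
      π'.map Prod.snd = π.map Prod.snd ∧
      ∫ z, z.1 * z.2 ∂π ≤ ∫ z, z.1 * z.2 ∂π' +
        (eLpNorm (fun z : ℝ × ℝ => z.1 - z.2) p γ).toReal * (eLpNorm Prod.snd q π).toReal := by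
  obtain ⟨μ, hμ, hμγ, hμπ⟩ := exists_glue π γ hγ
  have hφ : Measurable (Prod.map Prod.fst id : (ℝ × ℝ) × ℝ → ℝ × ℝ) :=
    measurable_fst.fst.prodMk measurable_snd
  have hψ : Measurable (Prod.map Prod.snd id : (ℝ × ℝ) × ℝ → ℝ × ℝ) :=
    measurable_fst.snd.prodMk measurable_snd
  refine ⟨μ.map (Prod.map Prod.snd id), Measure.isProbabilityMeasure_map hψ.aemeasurable,
    ?_, ?_, ?_⟩
  · rw [Measure.map_map measurable_fst hψ, ← hμγ, Measure.map_map measurable_snd measurable_fst]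
    rfl
  · rw [Measure.map_map measurable_snd hψ, ← hμπ, Measure.map_map measurable_snd hφ]
    rfl
  have hx₁ : MemLp (fun w : (ℝ × ℝ) × ℝ => w.1.1) p μ := by
    rw [← hμπ] at hx; exact hx.comp_of_map hφ.aemeasurable
  have hd : MemLp (fun w : (ℝ × ℝ) × ℝ => w.1.1 - w.1.2) p μ := by
    rw [← hμγ] at hcost; exact hcost.comp_of_map measurable_fst.aemeasurable
  have hy' : MemLp (fun w : (ℝ × ℝ) × ℝ => w.2) q μ := by
    rw [← hμπ] at hy; exact hy.comp_of_map hφ.aemeasurable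
  have hx₂ : MemLp (fun w : (ℝ × ℝ) × ℝ => w.1.2) p μ := by
    simpa [Pi.sub_def] using hx₁.sub hd
  have hπint : ∫ z, z.1 * z.2 ∂π = ∫ w, w.1.1 * w.2 ∂μ := by
    rw [← hμπ, integral_map hφ.aemeasurable (by fun_prop)]
    rfl
  have hπ'int : ∫ z, z.1 * z.2 ∂(μ.map (Prod.map Prod.snd id)) = ∫ w, w.1.2 * w.2 ∂μ := by
    rw [integral_map hψ.aemeasurable (by fun_prop)]
    rfl
  have hsplit : ∫ w, w.1.1 * w.2 ∂μ - ∫ w, w.1.2 * w.2 ∂μ = ∫ w, (w.1.1 - w.1.2) * w.2 ∂μ := by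
    have h₁ : Integrable (fun w : (ℝ × ℝ) × ℝ => w.1.1 * w.2) μ := hx₁.integrable_mul hy'
    have h₂ : Integrable (fun w : (ℝ × ℝ) × ℝ => w.1.2 * w.2) μ := hx₂.integrable_mul hy'
    rw [← integral_sub h₁ h₂]
    simp only [sub_mul]
  have hd_norm : eLpNorm (fun w : (ℝ × ℝ) × ℝ => w.1.1 - w.1.2) p μ
      = eLpNorm (fun z : ℝ × ℝ => z.1 - z.2) p γ := by
    rw [← hμγ, eLpNorm_map_measure (hμγ ▸ hcost.1) measurable_fst.aemeasurable]
    rfl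
  have hy_norm : eLpNorm (fun w : (ℝ × ℝ) × ℝ => w.2) q μ = eLpNorm Prod.snd q π := by
    rw [← hμπ, eLpNorm_map_measure (hμπ ▸ hy.1) hφ.aemeasurable]
    rfl
  have hholder := abs_integral_mul_le_eLpNorm_mul_eLpNorm hd hy'
  rw [hd_norm, hy_norm] at hholder
  linarith [le_abs_self (∫ w, (w.1.1 - w.1.2) * w.2 ∂μ)]

lemma memLp_fst_sub_snd {p : ℝ≥0∞} (γ : Measure (ℝ × ℝ)) (h₁ : Mmom p (γ.map Prod.fst) < ⊤)
    (h₂ : Mmom p (γ.map Prod.snd) < ⊤) : MemLp (fun z : ℝ × ℝ => z.1 - z.2) p γ :=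
  (memLp_of_Mmom_map_lt_top measurable_fst h₁).sub (memLp_of_Mmom_map_lt_top measurable_snd h₂)

lemma eLpNorm_fst_sub_snd_map_swap (p : ℝ≥0∞) (γ : Measure (ℝ × ℝ)) :
    eLpNorm (fun z : ℝ × ℝ => z.1 - z.2) p (γ.map Prod.swap) =
      eLpNorm (fun z : ℝ × ℝ => z.1 - z.2) p γ := by
  rw [eLpNorm_map_measure (by fun_prop) measurable_swap.aemeasurable, ← eLpNorm_neg]
  congr 1
  funext z
  simp

def chiValues (R : Set (Measure ℝ)) (m : Measure ℝ) : Set ℝ :=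
  {v : ℝ | ∃ π : Measure (ℝ × ℝ), IsProbabilityMeasure π ∧
    π.map Prod.fst = m ∧ π.map Prod.snd ∈ R ∧ v = ∫ z : ℝ × ℝ, z.1 * z.2 ∂π}

lemma chi_eq_sSup_chiValues (R : Set (Measure ℝ)) (m : Measure ℝ) :
    chi R m = sSup (chiValues R m) := rfl

lemma chiValues_nonempty {R : Set (Measure ℝ)} (hR : ∀ r ∈ R, IsProbabilityMeasure r)
    (hR₀ : R.Nonempty) (m : Measure ℝ) [IsProbabilityMeasure m] : (chiValues R m).Nonempty := by
  obtain ⟨r, hr⟩ := hR₀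
  have := hR r hr
  have hsnd : (m.prod r).map Prod.snd = r := Measure.snd_prod
  exact ⟨_, m.prod r, inferInstance, Measure.fst_prod, by rwa [hsnd], rfl⟩

section HolderConjugate

variable {p q : ℝ≥0∞} [p.HolderConjugate q] {R : Set (Measure ℝ)}

lemma bddAbove_chiValues (hR : OTone q R) {m : Measure ℝ} (hm : Mmom p m < ⊤) :
    BddAbove (chiValues R m) := by
  refine ⟨(Mmom p m).toReal * (⨆ r ∈ R, Mmom q r).toReal, ?_⟩
  rintro _ ⟨π, -, rfl, hπr, rfl⟩
  have hr : Mmom q (π.map Prod.snd) ≤ ⨆ r ∈ R, Mmom q r := le_biSup _ hπr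
  have hholder := abs_integral_mul_le_eLpNorm_mul_eLpNorm
    (memLp_of_Mmom_map_lt_top measurable_fst hm)
    (memLp_of_Mmom_map_lt_top measurable_snd (hr.trans_lt hR.2))
  rw [eLpNorm_eq_Mmom_map _ measurable_fst, eLpNorm_eq_Mmom_map _ measurable_snd] at hholder
  calc ∫ z, z.1 * z.2 ∂π
    _ ≤ (Mmom p (π.map Prod.fst)).toReal * (Mmom q (π.map Prod.snd)).toReal :=
      (le_abs_self _).trans hholder
    _ ≤ (Mmom p (π.map Prod.fst)).toReal * (⨆ r ∈ R, Mmom q r).toReal := by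
      gcongr
      exact hR.2.ne

lemma chi_le_chi_add (hR : OTone q R) (γ : Measure (ℝ × ℝ)) [IsProbabilityMeasure γ]
    (h₁ : Mmom p (γ.map Prod.fst) < ⊤) (h₂ : Mmom p (γ.map Prod.snd) < ⊤) :
    chi R (γ.map Prod.fst) ≤ chi R (γ.map Prod.snd) +
      (⨆ r ∈ R, Mmom q r).toReal * (eLpNorm (fun z : ℝ × ℝ => z.1 - z.2) p γ).toReal := by
  rcases R.eq_empty_or_nonempty with rfl | hR₀
  · simp [chi] -- `chi ∅ m = sSup ∅ = 0`
  have := Measure.isProbabilityMeasure_map (μ := γ) measurable_fst.aemeasurable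
  simp only [chi_eq_sSup_chiValues]
  refine csSup_le (chiValues_nonempty hR.1 hR₀ _) ?_
  rintro _ ⟨π, hπ, hπ₁, hπr, rfl⟩
  have hr : Mmom q (π.map Prod.snd) ≤ ⨆ r ∈ R, Mmom q r := le_biSup _ hπr
  obtain ⟨π', hπ', hπ'₁, hπ'₂, hle⟩ := exists_plan_integral_le π
    (memLp_of_Mmom_map_lt_top measurable_fst (hπ₁ ▸ h₁))
    (memLp_of_Mmom_map_lt_top measurable_snd (hr.trans_lt hR.2)) γ hπ₁.symm
    (memLp_fst_sub_snd γ h₁ h₂)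
  have hπ' : ∫ z, z.1 * z.2 ∂π' ∈ chiValues R (γ.map Prod.snd) :=
    ⟨π', hπ', hπ'₁, hπ'₂ ▸ hπr, rfl⟩
  rw [eLpNorm_eq_Mmom_map _ measurable_snd, mul_comm] at hle
  refine hle.trans (add_le_add (le_csSup (bddAbove_chiValues hR h₂) hπ') ?_)
  gcongr
  exact hR.2.ne

lemma abs_chi_sub_le (hR : OTone q R) (γ : Measure (ℝ × ℝ)) [IsProbabilityMeasure γ]
    (h₁ : Mmom p (γ.map Prod.fst) < ⊤) (h₂ : Mmom p (γ.map Prod.snd) < ⊤) :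
    |chi R (γ.map Prod.snd) - chi R (γ.map Prod.fst)| ≤
      (⨆ r ∈ R, Mmom q r).toReal * (eLpNorm (fun z : ℝ × ℝ => z.1 - z.2) p γ).toReal := by
  have := Measure.isProbabilityMeasure_map (μ := γ) measurable_swap.aemeasurable
  have hfst : (γ.map Prod.swap).map Prod.fst = γ.map Prod.snd := Measure.fst_map_swap
  have hsnd : (γ.map Prod.swap).map Prod.snd = γ.map Prod.fst := Measure.snd_map_swap
  have hswap := chi_le_chi_add hR (γ.map Prod.swap) (hfst ▸ h₂) (hsnd ▸ h₁)
  rw [hfst, hsnd, eLpNorm_fst_sub_snd_map_swap] at hswap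
  rw [abs_sub_le_iff]
  constructor <;> linarith [chi_le_chi_add hR γ h₁ h₂]

end HolderConjugate

lemma le_toReal_mul_iInf {ι : Type*} [Nonempty ι] {a : ℝ≥0∞} (ha : a ≠ ⊤) {f : ι → ℝ≥0∞}
    (hf : ∀ i, f i ≠ ⊤) {x : ℝ} (h : ∀ i, x ≤ a.toReal * (f i).toReal) :
    x ≤ a.toReal * (⨅ i, f i).toReal := by
  have hinf : a * ⨅ i, f i ≠ ⊤ :=
    ENNReal.mul_ne_top ha (ne_top_of_le_ne_top (hf (Classical.arbitrary ι)) (iInf_le _ _))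
  rw [← ENNReal.toReal_mul, ← ENNReal.ofReal_le_iff_le_toReal hinf,
    ENNReal.mul_iInf (by simp [ha])]
  refine le_iInf fun i => ?_
  rw [ENNReal.ofReal_le_iff_le_toReal (ENNReal.mul_ne_top ha (hf i)), ENNReal.toReal_mul]
  exact h i

theorem chi_lipschitz_general
    (p q : ℝ≥0∞) (hpq : p⁻¹ + q⁻¹ = 1)
    (R : Set (Measure ℝ)) (hR1 : OTone q R) :
    (∀ m₁ m₂ : Measure ℝ, IsProbabilityMeasure m₁ → Mmom p m₁ < ⊤ →
      IsProbabilityMeasure m₂ → Mmom p m₂ < ⊤ →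
      ∀ γ : Measure (ℝ × ℝ), IsProbabilityMeasure γ →
        γ.map Prod.fst = m₁ → γ.map Prod.snd = m₂ →
        |chi R m₂ - chi R m₁| ≤
          (⨆ r ∈ R, Mmom q r).toReal * (eLpNorm (fun z : ℝ × ℝ => z.1 - z.2) p γ).toReal) ∧
    (∀ m₁ m₂ : Measure ℝ, IsProbabilityMeasure m₁ → Mmom p m₁ < ⊤ →
      IsProbabilityMeasure m₂ → Mmom p m₂ < ⊤ →
      |chi R m₂ - chi R m₁| ≤ (⨆ r ∈ R, Mmom q r).toReal * (Wassp p m₁ m₂).toReal) := by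
  have : p.HolderConjugate q := ENNReal.holderConjugate_iff.mpr hpq
  refine ⟨fun m₁ m₂ _ h₁ _ h₂ γ _ hγ₁ hγ₂ => ?_, fun m₁ m₂ _ h₁ _ h₂ => ?_⟩
  · subst hγ₁ hγ₂
    exact abs_chi_sub_le hR1 γ h₁ h₂
  have : Nonempty {γ : Measure (ℝ × ℝ) // IsProbabilityMeasure γ ∧
      γ.map Prod.fst = m₁ ∧ γ.map Prod.snd = m₂} :=
    ⟨⟨m₁.prod m₂, inferInstance, Measure.fst_prod, Measure.snd_prod⟩⟩
  refine le_toReal_mul_iInf hR1.2.ne (fun ⟨γ, _, hγ₁, hγ₂⟩ => ?_) (fun ⟨γ, _, hγ₁, hγ₂⟩ => ?_)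
  · subst hγ₁ hγ₂
    exact abs_chi_sub_le hR1 γ h₁ h₂
  · subst hγ₁ hγ₂
    exact (memLp_fst_sub_snd γ h₁ h₂).2.ne

/-- Lipschitz continuity of `χ_R`: for `R` satisfying (OT)(i) with `L_R = sup_{r ∈ R} M_q(r)`,
for any coupling `γ` of `m₁, m₂ ∈ P_p(ℝ)` one has
`|χ_R(m₂) − χ_R(m₁)| ≤ L_R · (∫ |x₂ − x₁|^p dγ)^{1/p}`; in particular `χ_R` is
`L_R`-Lipschitz for the `p`-Wasserstein distance. -/
theorem chi_lipschitz
    (p q : ℝ≥0∞) (hp1 : 1 ≤ p) (hptop : p ≠ ⊤) (hpq : p⁻¹ + q⁻¹ = 1)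
    (R : Set (Measure ℝ)) (hR1 : OTone q R) :
    (∀ m₁ m₂ : Measure ℝ, IsProbabilityMeasure m₁ → Mmom p m₁ < ⊤ →
      IsProbabilityMeasure m₂ → Mmom p m₂ < ⊤ →
      ∀ γ : Measure (ℝ × ℝ), IsProbabilityMeasure γ →
        γ.map Prod.fst = m₁ → γ.map Prod.snd = m₂ →
        |chi R m₂ - chi R m₁| ≤
          (⨆ r ∈ R, Mmom q r).toReal * (eLpNorm (fun z : ℝ × ℝ => z.1 - z.2) p γ).toReal) ∧
    (∀ m₁ m₂ : Measure ℝ, IsProbabilityMeasure m₁ → Mmom p m₁ < ⊤ →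
      IsProbabilityMeasure m₂ → Mmom p m₂ < ⊤ →
      |chi R m₂ - chi R m₁| ≤ (⨆ r ∈ R, Mmom q r).toReal * (Wassp p m₁ m₂).toReal) :=
  chi_lipschitz_general p q hpq R hR1
end
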